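/- arXiv:2001.06831 — 8 statements merged into one kernel-verified Lean document; each statement's English description precedes it below -/
import Mathlib

section
/- Let X₁, X₂, … be i.i.d. nonnegative random variables with common distribution μ, let θ₁, θ₂, … be positive real thresholds, and let N(ω) = inf{ i ≥ 1 : X_i(ω) ≤ θ_i }. Define Y(ω) = ∑_{i=1}^{N(ω)-1} θ_i + X_{N(ω)}(ω) on {N < ∞} (the time elapsed until the first successfully received update). Then, with all integrals and sums taken in [0,∞], ∫_{{N<∞}} Y dℙ = ∑_{j=1}^∞ ( ∏_{i=1}^{j-1} μ((θ_i,∞)) ) · ∫_{[0,θ_j]} x dμ(x) + ∑_{j=1}^∞ ( ∏_{i=1}^{j} μ((θ_i,∞)) ) · μ([0,θ_{j+1}]) · ( ∑_{i=1}^{j} θ_i ). -/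
/-!
The event `{N < ∞}` is the disjoint union over `j` of the events
`{N = j + 1} = {X₁ > θ₁, …, X_j > θ_j, X_{j+1} ≤ θ_{j+1}}`. On the `j`-th one,
`Y = θ₁ + ⋯ + θ_j + X_{j+1}`, so by independence its integral factors as
`∏_{i ≤ j} μ((θᵢ, ∞)) * ∫_{[0, θ_{j+1}]} (θ₁ + ⋯ + θ_j + x) dμ`. Summing over `j` and shifting the
index of the constant part, whose `j = 0` term vanishes, gives the two series.
-/

open MeasureTheory ProbabilityTheory
open scoped ENNReal

section Independence

variable {Ω ι β : Type*} [MeasurableSpace Ω] [MeasurableSpace β] {P : Measure Ω} {μ : Measure β}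
  {X : ι → Ω → β}

theorem ProbabilityTheory.iIndepFun.lintegral_prod_comp (hX : iIndepFun X P)
    (hmeas : ∀ i, Measurable (X i)) (hdist : ∀ i, P.map (X i) = μ) (s : Finset ι)
    {f : ι → β → ℝ≥0∞} (hf : ∀ i, Measurable (f i)) :
    ∫⁻ ω, ∏ i ∈ s, f i (X i ω) ∂P = ∏ i ∈ s, ∫⁻ x, f i x ∂μ :=
  (lintegral_prod_eq_prod_lintegral_of_indepFun s _ (hX.comp f hf)
    fun i => (hf i).comp (hmeas i)).trans <| Finset.prod_congr rfl fun i _ => by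
      rw [← hdist i, lintegral_map (hf i) (hmeas i)]
      rfl

theorem ProbabilityTheory.iIndepFun.setLIntegral_biInter_preimage (hX : iIndepFun X P)
    (hmeas : ∀ i, Measurable (X i)) (hdist : ∀ i, P.map (X i) = μ) {s : Finset ι} {k : ι}
    (hk : k ∉ s) {B : ι → Set β} (hB : ∀ i, MeasurableSet (B i)) {g : β → ℝ≥0∞}
    (hg : Measurable g) :
    ∫⁻ ω in ⋂ i ∈ s, X i ⁻¹' B i, g (X k ω) ∂P = (∏ i ∈ s, μ (B i)) * ∫⁻ x, g x ∂μ := by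
  classical
  set f := Function.update (fun i => (B i).indicator (1 : β → ℝ≥0∞)) k g
  have hfk : f k = g := Function.update_self ..
  have hfs : ∀ i ∈ s, f i = (B i).indicator 1 := fun i hi =>
    Function.update_of_ne (ne_of_mem_of_not_mem hi hk) ..
  have hf : ∀ i, Measurable (f i) := by
    intro i
    rcases eq_or_ne i k with rfl | hi
    · rwa [hfk]
    · simpa [f, hi] using measurable_one.indicator (hB i)
  -- the integrand is a product of functions of the independent coordinates
  have hprod : ∀ ω, (⋂ i ∈ s, X i ⁻¹' B i).indicator (fun ω => g (X k ω)) ω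
      = ∏ i ∈ insert k s, f i (X i ω) := by
    intro ω
    rw [Finset.prod_insert hk, hfk, Finset.prod_congr rfl fun i hi => by
      rw [hfs i hi, ← Set.indicator_comp_right], prod_indicator_apply]
    simp [Set.indicator]
  rw [← lintegral_indicator (Finset.measurableSet_biInter s fun i _ => hmeas i (hB i)),
    lintegral_congr hprod, hX.lintegral_prod_comp hmeas hdist _ hf, Finset.prod_insert hk,
    hfk, mul_comm, Finset.prod_congr rfl fun i hi => by
      rw [hfs i hi, lintegral_indicator_one (hB i)]]

end Independence

theorem setLIntegral_Iic_ofReal_const_add {μ : Measure ℝ} (hμ : μ (Set.Iio 0) = 0) {c : ℝ}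
    (hc : 0 ≤ c) (t : ℝ) :
    ∫⁻ x in Set.Iic t, ENNReal.ofReal (c + x) ∂μ
      = ∫⁻ x in Set.Icc 0 t, ENNReal.ofReal x ∂μ + ENNReal.ofReal c * μ (Set.Icc 0 t) := by
  have hIcc : (Set.Iic t : Set ℝ) =ᵐ[μ] Set.Icc 0 t := by
    have hpos : ∀ᵐ x ∂μ, 0 ≤ x := ae_iff.2 (measure_mono_null (fun _ => not_le.1) hμ)
    filter_upwards [hpos] with x hx
    exact propext ⟨fun h => ⟨hx, h⟩, And.right⟩
  rw [setLIntegral_congr hIcc, setLIntegral_congr_fun measurableSet_Icc fun x hx =>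
      ENNReal.ofReal_add hc hx.1, lintegral_add_left measurable_const, setLIntegral_const,
    add_comm]

section FirstSuccess

variable {Ω : Type*}

def firstSuccessAt (S : ℕ → Set Ω) (j : ℕ) : Set Ω :=
  (⋂ i ∈ Finset.Icc 1 j, (S i)ᶜ) ∩ S (j + 1)

variable {S : ℕ → Set Ω} {ω : Ω}

theorem mem_firstSuccessAt {j : ℕ} :
    ω ∈ firstSuccessAt S j ↔ (∀ i, 1 ≤ i → i ≤ j → ω ∉ S i) ∧ ω ∈ S (j + 1) := by
  simp [firstSuccessAt, and_imp]

theorem sInf_eq_of_mem_firstSuccessAt {j : ℕ} (hω : ω ∈ firstSuccessAt S j) :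
    sInf {i | 1 ≤ i ∧ ω ∈ S i} = j + 1 := by
  rw [mem_firstSuccessAt] at hω
  refine le_antisymm (Nat.sInf_le ⟨Nat.le_add_left 1 j, hω.2⟩)
    (le_csInf ⟨_, Nat.le_add_left 1 j, hω.2⟩ ?_)
  rintro i ⟨hi1, hiS⟩
  by_contra! hij
  exact hω.1 i hi1 (Nat.le_of_lt_succ hij) hiS

theorem pairwise_disjoint_firstSuccessAt :
    Pairwise (Function.onFun Disjoint (firstSuccessAt S)) :=
  fun _ _ hjk => Set.disjoint_left.2 fun _ hj hk =>
    hjk (Nat.succ_injective ((sInf_eq_of_mem_firstSuccessAt hj).symm.trans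
      (sInf_eq_of_mem_firstSuccessAt hk)))

theorem iUnion_firstSuccessAt : ⋃ j, firstSuccessAt S j = {ω | ∃ i, 1 ≤ i ∧ ω ∈ S i} := by
  ext ω
  simp only [Set.mem_iUnion]
  constructor
  · rintro ⟨j, hj⟩
    exact ⟨j + 1, Nat.le_add_left 1 j, (mem_firstSuccessAt.1 hj).2⟩
  · intro hne
    obtain ⟨hn1, hnS⟩ := Nat.sInf_mem (s := {i | 1 ≤ i ∧ ω ∈ S i}) hne
    obtain ⟨j, hj⟩ := Nat.exists_eq_add_of_le' hn1
    refine ⟨j, mem_firstSuccessAt.2 ⟨fun i hi1 hij hiS => ?_, hj ▸ hnS⟩⟩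
    exact Nat.notMem_of_lt_sInf (s := {i | 1 ≤ i ∧ ω ∈ S i}) (by omega) ⟨hi1, hiS⟩

theorem MeasurableSet.firstSuccessAt [MeasurableSpace Ω] (hS : ∀ i, MeasurableSet (S i))
    (j : ℕ) : MeasurableSet (firstSuccessAt S j) :=
  (Finset.measurableSet_biInter _ fun i _ => (hS i).compl).inter (hS (j + 1))

end FirstSuccess

theorem lintegral_firstSuccessAt_ofReal_sum_add {Ω : Type*} [MeasurableSpace Ω] {P : Measure Ω}
    {μ : Measure ℝ} {X : ℕ → Ω → ℝ} (hX : iIndepFun X P) (hmeas : ∀ i, Measurable (X i))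
    (hdist : ∀ i, P.map (X i) = μ) (hμ : μ (Set.Iio 0) = 0) {θ : ℕ → ℝ} (hθ : ∀ i, 0 ≤ θ i)
    (j : ℕ) :
    ∫⁻ ω in firstSuccessAt (fun i => X i ⁻¹' Set.Iic (θ i)) j,
        ENNReal.ofReal (∑ i ∈ Finset.Icc 1 j, θ i + X (j + 1) ω) ∂P
      = (∏ i ∈ Finset.Icc 1 j, μ (Set.Ioi (θ i)))
        * (∫⁻ x in Set.Icc 0 (θ (j + 1)), ENNReal.ofReal x ∂μ
          + ENNReal.ofReal (∑ i ∈ Finset.Icc 1 j, θ i) * μ (Set.Icc 0 (θ (j + 1)))) := by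
  set c := ∑ i ∈ Finset.Icc 1 j, θ i
  set g := (Set.Iic (θ (j + 1))).indicator fun x => ENNReal.ofReal (c + x)
  have hg : Measurable g := by fun_prop (disch := exact measurableSet_Iic)
  have hsplit : firstSuccessAt (fun i => X i ⁻¹' Set.Iic (θ i)) j
      = X (j + 1) ⁻¹' Set.Iic (θ (j + 1)) ∩ ⋂ i ∈ Finset.Icc 1 j, X i ⁻¹' Set.Ioi (θ i) := by
    simp only [firstSuccessAt, ← Set.preimage_compl, Set.compl_Iic, Set.inter_comm]
  have hcomp : ∀ ω, (X (j + 1) ⁻¹' Set.Iic (θ (j + 1))).indicator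
      (fun ω => ENNReal.ofReal (c + X (j + 1) ω)) ω = g (X (j + 1) ω) := fun ω =>
    Set.indicator_comp_right (g := fun x => ENNReal.ofReal (c + x)) (X (j + 1))
  rw [hsplit, ← setLIntegral_indicator (hmeas _ measurableSet_Iic), lintegral_congr hcomp,
    hX.setLIntegral_biInter_preimage hmeas hdist (by simp) (fun _ => measurableSet_Ioi) hg,
    lintegral_indicator measurableSet_Iic,
    setLIntegral_Iic_ofReal_const_add hμ (Finset.sum_nonneg fun i _ => hθ i)]

theorem stmt_1_general
    {Ω : Type*} [MeasurableSpace Ω] (P : Measure Ω)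
    (X : ℕ → Ω → ℝ) (hmeas : ∀ i, Measurable (X i))
    (hindep : iIndepFun X P)
    (μ : Measure ℝ)
    (hdist : ∀ i, Measure.map (X i) P = μ)
    (hnonneg : μ (Set.Iio 0) = 0)
    (θ : ℕ → ℝ) (hθ : ∀ i, 0 < θ i)
    (N : Ω → ℕ) (hN : ∀ ω, N ω = sInf {i : ℕ | 1 ≤ i ∧ X i ω ≤ θ i})
    (Y : Ω → ℝ) (hY : ∀ ω, Y ω = (∑ i ∈ Finset.Ico 1 (N ω), θ i) + X (N ω) ω) :
    ∫⁻ ω in {ω | ∃ i, 1 ≤ i ∧ X i ω ≤ θ i}, ENNReal.ofReal (Y ω) ∂P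
      = (∑' j : ℕ, (∏ i ∈ Finset.Icc 1 j, μ (Set.Ioi (θ i)))
            * ∫⁻ x in Set.Icc 0 (θ (j + 1)), ENNReal.ofReal x ∂μ)
        + ∑' j : ℕ, (∏ i ∈ Finset.Icc 1 (j + 1), μ (Set.Ioi (θ i)))
            * μ (Set.Icc 0 (θ (j + 2)))
            * ENNReal.ofReal (∑ i ∈ Finset.Icc 1 (j + 1), θ i) := by
  set S := fun i => X i ⁻¹' Set.Iic (θ i)
  have hS : ∀ i, MeasurableSet (S i) := fun i => hmeas i measurableSet_Iic
  have hYj : ∀ j, ∫⁻ ω in firstSuccessAt S j, ENNReal.ofReal (Y ω) ∂P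
      = ∫⁻ ω in firstSuccessAt S j, ENNReal.ofReal (∑ i ∈ Finset.Icc 1 j, θ i + X (j + 1) ω) ∂P :=
    fun j => setLIntegral_congr_fun (.firstSuccessAt hS j) fun ω hω => by
      rw [hY, (hN ω).trans (sInf_eq_of_mem_firstSuccessAt hω), Finset.Ico_add_one_right_eq_Icc]
  have hunion : {ω | ∃ i, 1 ≤ i ∧ X i ω ≤ θ i} = ⋃ j, firstSuccessAt S j :=
    iUnion_firstSuccessAt.symm
  rw [hunion, lintegral_iUnion (.firstSuccessAt hS) pairwise_disjoint_firstSuccessAt,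
    tsum_congr fun j => (hYj j).trans (lintegral_firstSuccessAt_ofReal_sum_add hindep hmeas
    hdist hnonneg (fun i => (hθ i).le) j)]
  simp_rw [mul_add]
  rw [ENNReal.tsum_add]
  congr 1
  rw [tsum_eq_zero_add' ENNReal.summable]
  simp only [Finset.Icc_eq_empty_of_lt zero_lt_one, Finset.sum_empty, ENNReal.ofReal_zero,
    zero_mul, mul_zero, zero_add]
  exact tsum_congr fun j => by ring

/-- For i.i.d. nonnegative service times `X i` with law `μ` and positive
thresholds `θ i`, letting `N ω = inf {i ≥ 1 : X i ω ≤ θ i}` and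
`Y ω = ∑_{i=1}^{N ω - 1} θ i + X (N ω) ω` (the time until the first successful reception),
`∫_{N<∞} Y dP = ∑_{j=1}^∞ (∏_{i=1}^{j-1} μ((θ_i,∞))) ∫_{[0,θ_j]} x dμ
  + ∑_{j=1}^∞ (∏_{i=1}^{j} μ((θ_i,∞))) μ([0,θ_{j+1}]) (∑_{i=1}^j θ_i)`,
with all integrals and sums taken in `[0,∞]`. -/
theorem stmt_1
    {Ω : Type*} [MeasurableSpace Ω] (P : Measure Ω) [IsProbabilityMeasure P]
    (X : ℕ → Ω → ℝ) (hmeas : ∀ i, Measurable (X i))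
    (hindep : iIndepFun X P)
    (μ : Measure ℝ) [IsProbabilityMeasure μ]
    (hdist : ∀ i, Measure.map (X i) P = μ)
    (hnonneg : μ (Set.Iio 0) = 0)
    (θ : ℕ → ℝ) (hθ : ∀ i, 0 < θ i)
    (N : Ω → ℕ) (hN : ∀ ω, N ω = sInf {i : ℕ | 1 ≤ i ∧ X i ω ≤ θ i})
    (Y : Ω → ℝ) (hY : ∀ ω, Y ω = (∑ i ∈ Finset.Ico 1 (N ω), θ i) + X (N ω) ω) :
    ∫⁻ ω in {ω | ∃ i, 1 ≤ i ∧ X i ω ≤ θ i}, ENNReal.ofReal (Y ω) ∂P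
      = (∑' j : ℕ, (∏ i ∈ Finset.Icc 1 j, μ (Set.Ioi (θ i)))
            * ∫⁻ x in Set.Icc 0 (θ (j + 1)), ENNReal.ofReal x ∂μ)
        + ∑' j : ℕ, (∏ i ∈ Finset.Icc 1 (j + 1), μ (Set.Ioi (θ i)))
            * μ (Set.Icc 0 (θ (j + 2)))
            * ENNReal.ofReal (∑ i ∈ Finset.Icc 1 (j + 1), θ i) :=
  stmt_1_general P X hmeas hindep μ hdist hnonneg θ hθ N hN Y hY
end

section
/- Let X₁, X₂, … be i.i.d. nonnegative random variables with common distribution μ, fix θ > 0 with F(θ) = μ((-∞,θ]) > 0, and let N(ω) = inf{ i ≥ 1 : X_i(ω) ≤ θ }. Then the total time until the first successful reception, Y = θ·(N − 1) + X_N (set to 0 on the null event {N = ∞}), is integrable and E[Y] = ( θ − ∫_0^θ F(x) dx ) / F(θ), where ∫_0^θ F(x) dx is the Lebesgue integral of the CDF over [0,θ]. -/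
/-!
Write `A n` for the event that the first `n` updates are all preempted, i.e. `N > n`. On the
event `N < ∞`, which is almost sure because `P (A n) → 0`, we have
`Y = ∑_{n ≥ 0} 1_{A n} · min (X (n+1)) θ`: each preempted update contributes `θ`, the successful
one contributes `X_N`. Since `A n` depends only on `X 1, …, X n`, it is independent of `X (n+1)`
and has probability `(1 - F θ)^n`, so summing a geometric series gives
`E[Y] = E[min X θ] / F θ` (Wald's identity). The layer-cake formula turns
`E[min X θ]` into `∫_0^θ (1 - F)`.
-/

open MeasureTheory ProbabilityTheory Set ENNReal

lemma ae_nonneg_of_measure_Iio_zero {μ : Measure ℝ} (h0 : μ (Iio 0) = 0) : ∀ᵐ x ∂μ, 0 ≤ x :=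
  ae_iff.2 (by simp only [not_le]; exact h0)

lemma lintegral_ofReal_min_lt_top {μ : Measure ℝ} [IsFiniteMeasure μ] (θ : ℝ) :
    ∫⁻ x, ENNReal.ofReal (min x θ) ∂μ < ∞ :=
  (lintegral_mono fun x => ENNReal.ofReal_le_ofReal (min_le_right x θ)).trans_lt <| by
    rw [lintegral_const]
    exact ENNReal.mul_lt_top ofReal_lt_top (measure_lt_top μ univ)

lemma lintegral_ofReal_min_eq_setLIntegral_Ioo {μ : Measure ℝ} (h0 : μ (Iio 0) = 0) {θ : ℝ}
    (hθ : 0 ≤ θ) :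
    ∫⁻ x, ENNReal.ofReal (min x θ) ∂μ = ∫⁻ t in Ioo 0 θ, μ (Ioi t) := by
  have hmin_nonneg : 0 ≤ᵐ[μ] fun x => min x θ := by
    filter_upwards [ae_nonneg_of_measure_Iio_zero h0] with x hx using le_min hx hθ
  have hlevel : ∀ t, μ {x | t < min x θ} = (Iio θ).indicator (fun t => μ (Ioi t)) t := by
    intro t
    by_cases ht : t < θ
    · simp [ht, Ioi_def]
    · simp [ht]
  rw [lintegral_eq_lintegral_meas_lt μ hmin_nonneg
    (measurable_id.min measurable_const).aemeasurable]
  simp_rw [hlevel]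
  rw [setLIntegral_indicator measurableSet_Iio, Iio_inter_Ioi]

lemma toReal_setLIntegral_Ioo_measure_Ioi {μ : Measure ℝ} [IsProbabilityMeasure μ] {θ : ℝ}
    (hθ : 0 ≤ θ) :
    (∫⁻ t in Ioo 0 θ, μ (Ioi t)).toReal = θ - ∫ x in Icc 0 θ, (μ (Iic x)).toReal := by
  have hF : Measurable fun x => (μ (Iic x)).toReal :=
    Monotone.measurable fun a b hab => ENNReal.toReal_mono (measure_ne_top _ _)
      (measure_mono (Iic_subset_Iic.2 hab))
  have hF_int : IntegrableOn (fun x => (μ (Iic x)).toReal) (Ioo 0 θ) :=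
    Measure.integrableOn_of_bounded (M := 1) measure_Ioo_lt_top.ne hF.aestronglyMeasurable
      (ae_of_all _ fun x => by simpa using ENNReal.toReal_mono one_ne_top prob_le_one)
  have hcompl : ∀ t, (μ (Ioi t)).toReal = 1 - (μ (Iic t)).toReal := fun t => by
    rw [← compl_Iic, prob_compl_eq_one_sub measurableSet_Iic,
      ENNReal.toReal_sub_of_le prob_le_one one_ne_top, toReal_one]
  rw [← integral_toReal
    (Antitone.measurable fun a b hab => measure_mono (Ioi_subset_Ioi hab)).aemeasurable
    (ae_of_all _ fun t => measure_lt_top μ _), integral_Icc_eq_integral_Ioo]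
  simp_rw [hcompl]
  rw [integral_sub (integrable_const 1) hF_int]
  simp [hθ]

/-- The event `N > n`. -/
def allPreempted {Ω : Type*} (X : ℕ → Ω → ℝ) (θ : ℝ) (n : ℕ) : Set Ω :=
  {ω | ∀ i ∈ Finset.Ico 1 (n + 1), θ < X i ω}

/-- `∑_{k = 1}^{N} min (X k) θ`, written as a series whose `k`-th term is switched on by `N ≥ k`. -/
noncomputable def cappedSum {Ω : Type*} (X : ℕ → Ω → ℝ) (θ : ℝ) (ω : Ω) : ℝ≥0∞ :=
  ∑' n, (allPreempted X θ n).indicator (fun ω => ENNReal.ofReal (min (X (n + 1) ω) θ)) ω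

section Deterministic

variable {Ω : Type*} {X : ℕ → Ω → ℝ} {θ : ℝ}

lemma allPreempted_eq_biInter (n : ℕ) :
    allPreempted X θ n = ⋂ i ∈ Finset.Ico 1 (n + 1), X i ⁻¹' Ioi θ := by
  ext ω
  simp [allPreempted]

lemma exists_eq_succ_of_eq_sInf {ω : Ω} {N : ℕ} (hN : N = sInf {i | 1 ≤ i ∧ X i ω ≤ θ})
    (h : ∃ i, 1 ≤ i ∧ X i ω ≤ θ) :
    ∃ k, N = k + 1 ∧ ω ∈ allPreempted X θ k ∧ X (k + 1) ω ≤ θ := by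
  obtain ⟨hN1, hNθ⟩ : 1 ≤ N ∧ X N ω ≤ θ := hN ▸ Nat.sInf_mem h
  obtain ⟨k, rfl⟩ := Nat.exists_eq_add_of_le' hN1
  refine ⟨k, rfl, fun i hi => not_le.1 fun hiθ => ?_, hNθ⟩
  have hi' := Finset.mem_Ico.1 hi
  exact Nat.notMem_of_lt_sInf (hN ▸ hi'.2) (show i ∈ {i | 1 ≤ i ∧ X i ω ≤ θ} from ⟨hi'.1, hiθ⟩)

lemma cappedSum_eq {ω : Ω} {k : ℕ} (hθ : 0 ≤ θ) (hX : 0 ≤ X (k + 1) ω)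
    (hpre : ω ∈ allPreempted X θ k) (hsucc : X (k + 1) ω ≤ θ) :
    cappedSum X θ ω = ENNReal.ofReal (θ * k + X (k + 1) ω) := by
  rw [cappedSum, tsum_eq_sum (s := Finset.range (k + 1)), Finset.sum_range_succ,
    indicator_of_mem hpre, min_eq_left hsucc]
  · have hθ_terms : ∀ n ∈ Finset.range k, (allPreempted X θ n).indicator
        (fun ω => ENNReal.ofReal (min (X (n + 1) ω) θ)) ω = ENNReal.ofReal θ := by
      intro n hn
      have hn' := Finset.mem_range.1 hn
      rw [indicator_of_mem (show ω ∈ allPreempted X θ n from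
          fun i hi => hpre i (by rw [Finset.mem_Ico] at hi ⊢; omega)),
        min_eq_right (hpre (n + 1) (Finset.mem_Ico.2 ⟨by omega, by omega⟩)).le]
    rw [Finset.sum_congr rfl hθ_terms, Finset.sum_const, Finset.card_range, nsmul_eq_mul,
      ENNReal.ofReal_add (by positivity) hX, ENNReal.ofReal_mul hθ, ofReal_natCast, mul_comm]
  · intro n hn
    refine indicator_of_notMem (fun h => (h (k + 1) ?_).not_ge hsucc) _
    rw [Finset.mem_range, not_lt] at hn
    exact Finset.mem_Ico.2 ⟨by omega, by omega⟩

end Deterministic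

section IID

variable {Ω : Type*} [MeasurableSpace Ω] {P : Measure Ω} {X : ℕ → Ω → ℝ} {μ : Measure ℝ}
  {θ : ℝ}

lemma measurableSet_allPreempted (hmeas : ∀ i, Measurable (X i)) (n : ℕ) :
    MeasurableSet (allPreempted X θ n) := by
  rw [allPreempted_eq_biInter]
  exact Finset.measurableSet_biInter _ fun i _ => hmeas i measurableSet_Ioi

lemma measurable_indicator_allPreempted (hmeas : ∀ i, Measurable (X i)) {g : ℝ → ℝ≥0∞}
    (hg : Measurable g) (n : ℕ) :
    Measurable ((allPreempted X θ n).indicator fun ω => g (X (n + 1) ω)) :=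
  (hg.comp (hmeas (n + 1))).indicator (measurableSet_allPreempted hmeas n)

lemma measurable_cappedSum (hmeas : ∀ i, Measurable (X i)) : Measurable (cappedSum X θ) :=
  Measurable.tsum (measurable_indicator_allPreempted hmeas
    (g := fun x => ENNReal.ofReal (min x θ)) (by fun_prop))

lemma measure_allPreempted (hindep : iIndepFun X P) (hmeas : ∀ i, Measurable (X i))
    (hdist : ∀ i, P.map (X i) = μ) (n : ℕ) :
    P (allPreempted X θ n) = μ (Ioi θ) ^ n := by
  rw [allPreempted_eq_biInter, hindep.measure_inter_preimage_eq_mul _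
    (sets := fun _ => Ioi θ) fun _ _ => measurableSet_Ioi]
  simp_rw [← Measure.map_apply (hmeas _) measurableSet_Ioi, hdist]
  simp

lemma ae_exists_le_of_measure_Iic_pos [IsProbabilityMeasure μ] (hindep : iIndepFun X P)
    (hmeas : ∀ i, Measurable (X i)) (hdist : ∀ i, P.map (X i) = μ) (hF : 0 < μ (Iic θ)) :
    ∀ᵐ ω ∂P, ∃ i, 1 ≤ i ∧ X i ω ≤ θ := by
  have hq : μ (Ioi θ) < 1 := by
    rw [← compl_Iic, prob_compl_eq_one_sub measurableSet_Iic]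
    exact ENNReal.sub_lt_self one_ne_top one_ne_zero hF.ne'
  refine ae_iff.2 (le_antisymm (ge_of_tendsto' (ENNReal.tendsto_pow_atTop_nhds_zero_of_lt_one hq)
    fun n => ?_) zero_le)
  rw [← measure_allPreempted hindep hmeas hdist n]
  exact measure_mono fun ω hω i hi => not_le.1 fun h => hω ⟨i, (Finset.mem_Ico.1 hi).1, h⟩

lemma indepFun_indicator_allPreempted (hindep : iIndepFun X P) (hmeas : ∀ i, Measurable (X i))
    (n : ℕ) :
    IndepFun ((allPreempted X θ n).indicator fun _ => (1 : ℝ≥0∞)) (X (n + 1)) P := by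
  let S := Finset.Ico 1 (n + 1)
  let B := {v : S → ℝ | ∀ i, θ < v i}
  have hB : MeasurableSet B := by
    simp only [B, ofPred_forall]
    exact MeasurableSet.iInter fun i => measurableSet_lt measurable_const (measurable_pi_apply i)
  have hST : Disjoint S {n + 1} := Finset.disjoint_singleton_right.2 (by simp [S])
  convert (hindep.indepFun_finset S {n + 1} hST hmeas).comp
    (measurable_const.indicator hB : Measurable (B.indicator fun _ => (1 : ℝ≥0∞)))
    (measurable_pi_apply ⟨n + 1, Finset.mem_singleton_self _⟩) using 1
  · ext ω
    simp only [Function.comp_apply, indicator_apply, allPreempted, B, mem_ofPred_eq,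
      Subtype.forall]
    rfl
  · rfl

lemma lintegral_indicator_allPreempted (hindep : iIndepFun X P) (hmeas : ∀ i, Measurable (X i))
    (hdist : ∀ i, P.map (X i) = μ) {g : ℝ → ℝ≥0∞} (hg : Measurable g) (n : ℕ) :
    ∫⁻ ω, (allPreempted X θ n).indicator (fun ω => g (X (n + 1) ω)) ω ∂P
      = μ (Ioi θ) ^ n * ∫⁻ x, g x ∂μ := by
  have hA := measurableSet_allPreempted (θ := θ) hmeas n
  have hmul : (allPreempted X θ n).indicator (fun ω => g (X (n + 1) ω))
      = (allPreempted X θ n).indicator (fun _ => 1) * (g ∘ X (n + 1)) := by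
    ext ω
    by_cases h : ω ∈ allPreempted X θ n <;> simp [h]
  rw [hmul, lintegral_mul_eq_lintegral_mul_lintegral_of_indepFun
    (measurable_const.indicator hA) (hg.comp (hmeas (n + 1)))
    ((indepFun_indicator_allPreempted hindep hmeas n).comp measurable_id hg),
    lintegral_indicator_const hA, one_mul, measure_allPreempted hindep hmeas hdist,
    ← hdist (n + 1), lintegral_map hg (hmeas _)]
  rfl

lemma lintegral_cappedSum [IsProbabilityMeasure μ] (hindep : iIndepFun X P)
    (hmeas : ∀ i, Measurable (X i)) (hdist : ∀ i, P.map (X i) = μ) :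
    ∫⁻ ω, cappedSum X θ ω ∂P = (∫⁻ x, ENNReal.ofReal (min x θ) ∂μ) / μ (Iic θ) := by
  have hg : Measurable fun x => ENNReal.ofReal (min x θ) := by fun_prop
  unfold cappedSum
  rw [lintegral_tsum fun n => (measurable_indicator_allPreempted hmeas hg n).aemeasurable]
  simp_rw [lintegral_indicator_allPreempted hindep hmeas hdist hg]
  rw [ENNReal.tsum_mul_right, ENNReal.tsum_geometric, ← prob_compl_eq_one_sub measurableSet_Ioi,
    compl_Ioi, div_eq_mul_inv, mul_comm]

end IID

open Classical in
theorem stmt_4_general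
    {Ω : Type*} [MeasurableSpace Ω] (P : Measure Ω)
    (X : ℕ → Ω → ℝ) (hmeas : ∀ i, Measurable (X i))
    (hindep : iIndepFun X P)
    (μ : Measure ℝ) [IsProbabilityMeasure μ]
    (hdist : ∀ i, Measure.map (X i) P = μ)
    (hnonneg : μ (Set.Iio 0) = 0)
    (θ : ℝ) (hθ : 0 < θ) (hF : 0 < μ (Set.Iic θ))
    (N : Ω → ℕ) (hN : ∀ ω, N ω = sInf {i : ℕ | 1 ≤ i ∧ X i ω ≤ θ})
    (Y : Ω → ℝ)
    (hY : ∀ ω, Y ω = if ∃ i, 1 ≤ i ∧ X i ω ≤ θ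
        then θ * ((N ω : ℝ) - 1) + X (N ω) ω else 0) :
    Integrable Y P ∧
      ∫ ω, Y ω ∂P
        = (θ - ∫ x in Set.Icc 0 θ, (μ (Set.Iic x)).toReal) / (μ (Set.Iic θ)).toReal := by
  have hX0 : ∀ᵐ ω ∂P, ∀ i, 0 ≤ X i ω := ae_all_iff.2 fun i =>
    ae_of_ae_map (hmeas i).aemeasurable (hdist i ▸ ae_nonneg_of_measure_Iio_zero hnonneg)
  have hYS : ∀ᵐ ω ∂P, 0 ≤ Y ω ∧ ENNReal.ofReal (Y ω) = cappedSum X θ ω := by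
    filter_upwards [hX0, ae_exists_le_of_measure_Iic_pos hindep hmeas hdist hF] with ω hXω hω
    obtain ⟨k, hk, hpre, hsucc⟩ := exists_eq_succ_of_eq_sInf (hN ω) hω
    have hYk : Y ω = θ * k + X (k + 1) ω := by
      rw [hY ω, if_pos hω, hk]
      push_cast
      ring
    rw [hYk, cappedSum_eq hθ.le (hXω _) hpre hsucc]
    exact ⟨add_nonneg (by positivity) (hXω _), rfl⟩
  have hY0 : 0 ≤ᵐ[P] Y := hYS.mono fun ω h => h.1
  have hYmeas : AEStronglyMeasurable Y P :=
    ((measurable_cappedSum (θ := θ) hmeas).ennreal_toReal.aemeasurable.congr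
      (hYS.mono fun ω h => by simp only [← h.2, ENNReal.toReal_ofReal h.1])).aestronglyMeasurable
  have hlint : ∫⁻ ω, ENNReal.ofReal (Y ω) ∂P
      = (∫⁻ x, ENNReal.ofReal (min x θ) ∂μ) / μ (Iic θ) := by
    rw [lintegral_congr_ae (hYS.mono fun ω h => h.2), lintegral_cappedSum hindep hmeas hdist]
  refine ⟨⟨hYmeas, (hasFiniteIntegral_iff_ofReal hY0).2
    (hlint ▸ ENNReal.div_lt_top (lintegral_ofReal_min_lt_top θ).ne hF.ne')⟩, ?_⟩
  rw [integral_eq_lintegral_of_nonneg_ae hY0 hYmeas, hlint, ENNReal.toReal_div,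
    lintegral_ofReal_min_eq_setLIntegral_Ioo hnonneg hθ.le,
    toReal_setLIntegral_Ioo_measure_Ioi hθ.le]

open Classical in
/-- For i.i.d. nonnegative service times `X i` with law `μ`, a fixed threshold
`θ > 0` with `F(θ) = μ((-∞,θ]) > 0`, and `N ω = inf {i ≥ 1 : X i ω ≤ θ}`, the total time
`Y = θ (N - 1) + X_N` until the first successful reception (set to `0` on the null event
`{N = ∞}`) is integrable with `E[Y] = (θ - ∫_0^θ F(x) dx) / F(θ)`, where `∫_0^θ F(x) dx` is the
Lebesgue integral of the CDF `F(x) = μ((-∞,x])` over `[0,θ]`. -/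
theorem stmt_4
    {Ω : Type*} [MeasurableSpace Ω] (P : Measure Ω) [IsProbabilityMeasure P]
    (X : ℕ → Ω → ℝ) (hmeas : ∀ i, Measurable (X i))
    (hindep : iIndepFun X P)
    (μ : Measure ℝ) [IsProbabilityMeasure μ]
    (hdist : ∀ i, Measure.map (X i) P = μ)
    (hnonneg : μ (Set.Iio 0) = 0)
    (θ : ℝ) (hθ : 0 < θ) (hF : 0 < μ (Set.Iic θ))
    (N : Ω → ℕ) (hN : ∀ ω, N ω = sInf {i : ℕ | 1 ≤ i ∧ X i ω ≤ θ})
    (Y : Ω → ℝ)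
    (hY : ∀ ω, Y ω = if ∃ i, 1 ≤ i ∧ X i ω ≤ θ
        then θ * ((N ω : ℝ) - 1) + X (N ω) ω else 0) :
    Integrable Y P ∧
      ∫ ω, Y ω ∂P
        = (θ - ∫ x in Set.Icc 0 θ, (μ (Set.Iic x)).toReal) / (μ (Set.Iic θ)).toReal :=
  stmt_4_general P X hmeas hindep μ hdist hnonneg θ hθ hF N hN Y hY
end

section
/- Let μ be a Borel probability measure on ℝ with μ((-∞,0)) = 0, with finite mean m = ∫ x dμ(x), and let θ > 0 satisfy F(θ) = μ((-∞,θ]) > 0 and μ((θ,∞)) > 0. Then ( 2·∫_{[0,θ]} x dμ(x) + θ·μ((θ,∞)) ) / F(θ) < 2m if and only if m < ( ∫_{(θ,∞)} (x − θ) dμ(x) ) / μ((θ,∞)) + θ/2. -/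
open MeasureTheory

/-!
Split the mean at `θ`: with `F = μ(-∞,θ]`, `T = μ(θ,∞)`, `A = ∫_{[0,θ]} x dμ` and
`B = ∫_{(θ,∞)} x dμ` one has `m = A + B` (μ has no mass below `0`), `F = 1 - T`
and `∫_{(θ,∞)} (x - θ) dμ = B - θT`.
Clearing the positive denominators `F` and `T`, both inequalities become `(2m + θ) T < 2B`.
-/

lemma setIntegral_Icc_eq_setIntegral_Iic_of_measure_Iio_eq_zero {μ : Measure ℝ} {f : ℝ → ℝ}
    {a b : ℝ} (h : μ (Set.Iio a) = 0) :
    ∫ x in Set.Icc a b, f x ∂μ = ∫ x in Set.Iic b, f x ∂μ := by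
  refine setIntegral_congr_set ?_
  rw [← Set.Ici_inter_Iic]
  exact inter_ae_eq_right_of_ae_eq_univ (ae_eq_univ.2 (by rwa [Set.compl_Ici]))

lemma setIntegral_sub_const_mul {μ : Measure ℝ} [IsFiniteMeasure μ]
    (hint : Integrable (fun x : ℝ => x) μ) (s : Set ℝ) (c : ℝ) :
    ∫ x in s, (x - c) ∂μ = ∫ x in s, x ∂μ - c * μ.real s := by
  rw [integral_sub hint.integrableOn (integrableOn_const (measure_ne_top μ _)),
    setIntegral_const, smul_eq_mul, mul_comm]

lemma div_lt_two_mul_add_iff {A B F T θ : ℝ} (hF : 0 < F) (hT : 0 < T) (hFT : F + T = 1) :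
    (2 * A + θ * T) / F < 2 * (A + B) ↔ A + B < (B - θ * T) / T + θ / 2 := by
  rw [div_lt_iff₀ hF, ← sub_lt_iff_lt_add, lt_div_iff₀ hT, eq_sub_of_add_eq hFT]
  constructor <;> intro h <;> linarith

theorem stmt_9_general
    (μ : Measure ℝ) [IsProbabilityMeasure μ] (hnonneg : μ (Set.Iio 0) = 0)
    (hint : Integrable (fun x : ℝ => x) μ)
    (m : ℝ) (hm : m = ∫ x, x ∂μ)
    (θ : ℝ)
    (hF : 0 < (μ (Set.Iic θ)).toReal) (hT : 0 < (μ (Set.Ioi θ)).toReal) :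
    (2 * ∫ x in Set.Icc 0 θ, x ∂μ + θ * (μ (Set.Ioi θ)).toReal) / (μ (Set.Iic θ)).toReal
        < 2 * m
      ↔ m < (∫ x in Set.Ioi θ, (x - θ) ∂μ) / (μ (Set.Ioi θ)).toReal + θ / 2 := by
  have hmass : μ.real (Set.Iic θ) + μ.real (Set.Ioi θ) = 1 := by
    rw [← Set.compl_Iic]; exact probReal_add_probReal_compl measurableSet_Iic
  have hmean : m = ∫ x in Set.Icc 0 θ, x ∂μ + ∫ x in Set.Ioi θ, x ∂μ := by
    rw [hm, setIntegral_Icc_eq_setIntegral_Iic_of_measure_Iio_eq_zero hnonneg, ← Set.compl_Iic,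
      integral_add_compl measurableSet_Iic hint]
  rw [hmean, setIntegral_sub_const_mul hint]
  exact div_lt_two_mul_add_iff hF hT hmass

/-- **Lemma 3.** For a service-time distribution `μ` (Borel probability measure on
`ℝ` with `μ((-∞,0)) = 0`) with finite mean `m`, and `θ > 0` with `F(θ) = μ((-∞,θ]) > 0` and
`μ((θ,∞)) > 0`, the fixed-threshold policy strictly beats the zero-wait policy, i.e.
`(2 ∫_{[0,θ]} x dμ + θ μ((θ,∞))) / F(θ) < 2 m`, if and only if
`m < E[X - θ | X > θ] + θ/2 = (∫_{(θ,∞)} (x-θ) dμ) / μ((θ,∞)) + θ/2`. -/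
theorem stmt_9
    (μ : Measure ℝ) [IsProbabilityMeasure μ] (hnonneg : μ (Set.Iio 0) = 0)
    (hint : Integrable (fun x : ℝ => x) μ)
    (m : ℝ) (hm : m = ∫ x, x ∂μ)
    (θ : ℝ) (hθ : 0 < θ)
    (hF : 0 < (μ (Set.Iic θ)).toReal) (hT : 0 < (μ (Set.Ioi θ)).toReal) :
    (2 * ∫ x in Set.Icc 0 θ, x ∂μ + θ * (μ (Set.Ioi θ)).toReal) / (μ (Set.Iic θ)).toReal
        < 2 * m
      ↔ m < (∫ x in Set.Ioi θ, (x - θ) ∂μ) / (μ (Set.Ioi θ)).toReal + θ / 2 :=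
  stmt_9_general μ hnonneg hint m hm θ hF hT
end

section
/- Let μ be a Borel probability measure on ℝ with μ((-∞,0)) = 0, with finite mean m = ∫ x dμ(x), and let θ > 0 satisfy F(θ) = μ((-∞,θ]) > 0 and μ((θ,∞)) > 0. If ( ∫_{(θ,∞)} (x − θ) dμ(x) ) / μ((θ,∞)) > m, then ( 2·∫_{[0,θ]} x dμ(x) + θ·μ((θ,∞)) ) / F(θ) < 2m. -/
/-!
Split the mean at `θ`: `m = A + B` with `A = ∫_{x ≤ θ} x dμ`, `B = ∫_{x > θ} x dμ`, and
`F + T = 1` with `F = μ((-∞,θ])`, `T = μ((θ,∞))`; since `μ` lives on `[0,∞)`, the integral over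
`[0,θ]` is `A`. The hypothesis on the residual reads `B - θT > mT`, hence
`2A + θT = 2m - 2B + θT < 2m - 2mT - θT ≤ 2mF`.
-/

open MeasureTheory Set

theorem setIntegral_Icc_eq_setIntegral_Iic_of_measure_Iio_eq_zero_s10 {α E : Type*}
    [MeasurableSpace α] [LinearOrder α] [NormedAddCommGroup E] [NormedSpace ℝ E]
    {μ : Measure α} {a : α} (hμ : μ (Iio a) = 0) (f : α → E) (b : α) :
    ∫ x in Icc a b, f x ∂μ = ∫ x in Iic b, f x ∂μ := by
  rw [← Iic_sdiff_Iio]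
  exact setIntegral_congr_set (sdiff_null_ae_eq_self hμ)

theorem integral_eq_setIntegral_Iic_add_setIntegral_Ioi {E : Type*} [NormedAddCommGroup E]
    [NormedSpace ℝ E] {μ : Measure ℝ} {f : ℝ → E} (hf : Integrable f μ) (θ : ℝ) :
    ∫ x, f x ∂μ = ∫ x in Iic θ, f x ∂μ + ∫ x in Ioi θ, f x ∂μ := by
  rw [← compl_Iic, integral_add_compl measurableSet_Iic hf]

theorem setIntegral_sub_const {α : Type*} [MeasurableSpace α] {μ : Measure α}
    [IsFiniteMeasure μ] {s : Set α} {f : α → ℝ} (hf : IntegrableOn f s μ) (c : ℝ) :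
    ∫ x in s, (f x - c) ∂μ = ∫ x in s, f x ∂μ - μ.real s * c := by
  rw [integral_sub hf integrableOn_const, setIntegral_const, smul_eq_mul]

theorem probReal_Iic_add_probReal_Ioi (μ : Measure ℝ) [IsProbabilityMeasure μ] (θ : ℝ) :
    μ.real (Iic θ) + μ.real (Ioi θ) = 1 := by
  rw [← compl_Iic, measureReal_add_measureReal_compl measurableSet_Iic, probReal_univ]

theorem two_mul_add_div_lt_of_residual_gt {A B F T θ : ℝ} (hFT : F + T = 1) (hF : 0 < F)
    (hT : 0 < T) (hθ : 0 ≤ θ) (hres : (B - θ * T) / T > A + B) :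
    (2 * A + θ * T) / F < 2 * (A + B) := by
  rw [gt_iff_lt, lt_div_iff₀ hT] at hres
  have hmean : (A + B) * F + (A + B) * T = A + B := by rw [← mul_add, hFT, mul_one]
  rw [div_lt_iff₀ hF]
  linarith [mul_nonneg hθ hT.le]

/-- For a service-time distribution `μ` (Borel probability measure on `ℝ` with
`μ((-∞,0)) = 0`) with finite mean `m`, and `θ > 0` with `F(θ) = μ((-∞,θ]) > 0` and
`μ((θ,∞)) > 0`: if the conditional mean residual `E[X - θ | X > θ]` exceeds the mean `m`, then
preemption with threshold `θ` strictly beats the zero-wait policy: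
`(2 ∫_{[0,θ]} x dμ + θ μ((θ,∞))) / F(θ) < 2 m`. -/
theorem stmt_10
    (μ : Measure ℝ) [IsProbabilityMeasure μ] (hnonneg : μ (Set.Iio 0) = 0)
    (hint : Integrable (fun x : ℝ => x) μ)
    (m : ℝ) (hm : m = ∫ x, x ∂μ)
    (θ : ℝ) (hθ : 0 < θ)
    (hF : 0 < (μ (Set.Iic θ)).toReal) (hT : 0 < (μ (Set.Ioi θ)).toReal)
    (hres : (∫ x in Set.Ioi θ, (x - θ) ∂μ) / (μ (Set.Ioi θ)).toReal > m) :
    (2 * ∫ x in Set.Icc 0 θ, x ∂μ + θ * (μ (Set.Ioi θ)).toReal) / (μ (Set.Iic θ)).toReal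
      < 2 * m := by
  simp only [← measureReal_def] at hF hT hres ⊢
  rw [setIntegral_sub_const hint.integrableOn, mul_comm] at hres
  rw [setIntegral_Icc_eq_setIntegral_Iic_of_measure_Iio_eq_zero_s10 hnonneg]
  rw [hm, integral_eq_setIntegral_Iic_add_setIntegral_Ioi hint θ] at hres ⊢
  exact two_mul_add_div_lt_of_residual_gt (probReal_Iic_add_probReal_Ioi μ θ) hF hT hθ.le hres
end

section
/- Let μ be a Borel probability measure on ℝ with μ((-∞,0)) = 0, let 0 < a ≤ b with F(a) = μ((-∞,a]) > 0, define c′(θ) = 2·∫_{[0,θ]} x dμ(x) + θ·μ((θ,∞)) and T(U) = inf_{θ ∈ [a,b]} ( c′(θ) + U·(1 − F(θ)) ). Then there exists a unique U* ∈ [0,∞) such that T(U*) = U*. -/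
open MeasureTheory

/-- For a service-time distribution `μ` (Borel probability measure on `ℝ` with
`μ((-∞,0)) = 0`), thresholds restricted to `[a,b]` with `0 < a ≤ b` and `F(a) = μ((-∞,a]) > 0`,
one-step cost `c′(θ) = 2 ∫_{[0,θ]} x dμ + θ μ((θ,∞))`, and Bellman operator
`T(U) = inf_{θ ∈ [a,b]} (c′(θ) + U (1 - F(θ)))`, there exists a unique `U* ∈ [0,∞)` with
`T(U*) = U*`. -/
theorem stmt_12
    (μ : Measure ℝ) [IsProbabilityMeasure μ] (hnonneg : μ (Set.Iio 0) = 0)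
    (a b : ℝ) (ha : 0 < a) (hab : a ≤ b) (hFa : 0 < (μ (Set.Iic a)).toReal)
    (c' : ℝ → ℝ)
    (hc' : ∀ θ : ℝ, c' θ = 2 * ∫ x in Set.Icc 0 θ, x ∂μ + θ * (μ (Set.Ioi θ)).toReal)
    (T : ℝ → ℝ)
    (hT : ∀ U : ℝ, T U
        = sInf ((fun θ : ℝ => c' θ + U * (1 - (μ (Set.Iic θ)).toReal)) '' Set.Icc a b)) :
    ∃! U : ℝ, 0 ≤ U ∧ T U = U := by
  set F : ℝ → ℝ := fun θ => (μ (Set.Iic θ)).toReal with hFdef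
  have hFmono : Monotone F := fun x y hxy =>
    ENNReal.toReal_mono (measure_ne_top μ _) (measure_mono (Set.Iic_subset_Iic.2 hxy))
  have hFle1 : ∀ θ, F θ ≤ 1 := by
    intro θ
    have h1 : (μ (Set.Iic θ)).toReal ≤ (1 : ENNReal).toReal :=
      ENNReal.toReal_mono ENNReal.one_ne_top prob_le_one
    simpa using h1
  have hc'nn : ∀ θ ∈ Set.Icc a b, 0 ≤ c' θ := by
    intro θ hθ
    rw [hc' θ]
    have hθ0 : 0 ≤ θ := le_of_lt (lt_of_lt_of_le ha hθ.1)
    have hint : 0 ≤ ∫ x in Set.Icc 0 θ, x ∂μ :=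
      setIntegral_nonneg measurableSet_Icc (fun x hx => hx.1)
    have h2 : 0 ≤ θ * (μ (Set.Ioi θ)).toReal :=
      mul_nonneg hθ0 ENNReal.toReal_nonneg
    linarith
  set k : ℝ := 1 - F a with hkdef
  have hk0 : 0 ≤ k := by have := hFle1 a; linarith
  have hk1 : k < 1 := by have : 0 < F a := hFa; linarith
  set f : ℝ → ℝ → ℝ := fun U θ => c' θ + U * (1 - F θ) with hfdef
  have hfnn : ∀ U, 0 ≤ U → ∀ θ ∈ Set.Icc a b, 0 ≤ f U θ := by
    intro U hU θ hθ
    have h1 : 0 ≤ 1 - F θ := by have := hFle1 θ; linarith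
    have := hc'nn θ hθ
    have := mul_nonneg hU h1
    simp only [hfdef]
    linarith
  have hne : ∀ U : ℝ, ((fun θ => f U θ) '' Set.Icc a b).Nonempty :=
    fun U => ⟨f U a, ⟨a, ⟨le_refl a, hab⟩, rfl⟩⟩
  have hbdd : ∀ U, 0 ≤ U → BddBelow ((fun θ => f U θ) '' Set.Icc a b) := by
    intro U hU
    exact ⟨0, fun x ⟨θ, hθ, hx⟩ => hx ▸ hfnn U hU θ hθ⟩
  have hTnn : ∀ U, 0 ≤ U → 0 ≤ T U := by
    intro U hU
    rw [hT U]
    exact le_csInf (hne U) (fun x ⟨θ, hθ, hx⟩ => hx ▸ hfnn U hU θ hθ)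
  -- one-sided Lipschitz bound
  have hlip1 : ∀ U V, 0 ≤ U → 0 ≤ V → T U - T V ≤ k * |U - V| := by
    intro U V hU hV
    rw [hT U, hT V]
    rw [sub_le_comm]
    refine le_csInf (hne V) ?_
    rintro x ⟨θ, hθ, rfl⟩
    have h1 : sInf ((fun θ => f U θ) '' Set.Icc a b) ≤ f U θ :=
      csInf_le (hbdd U hU) ⟨θ, hθ, rfl⟩
    have h2 : f U θ ≤ f V θ + k * |U - V| := by
      have hFθ : F a ≤ F θ := hFmono hθ.1
      have h3 : 0 ≤ 1 - F θ := by have := hFle1 θ; linarith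
      have h4 : 1 - F θ ≤ k := by rw [hkdef]; linarith
      have h5 : (U - V) * (1 - F θ) ≤ |U - V| * (1 - F θ) :=
        mul_le_mul_of_nonneg_right (le_abs_self _) h3
      have h6 : |U - V| * (1 - F θ) ≤ |U - V| * k :=
        mul_le_mul_of_nonneg_left h4 (abs_nonneg _)
      simp only [hfdef]
      nlinarith
    linarith
  have hlip : ∀ U V, 0 ≤ U → 0 ≤ V → |T U - T V| ≤ k * |U - V| := by
    intro U V hU hV
    rw [abs_sub_le_iff]
    constructor
    · exact hlip1 U V hU hV
    · have := hlip1 V U hV hU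
      rwa [abs_sub_comm] at this
  -- existence via Banach fixed point on the closed set [0, ∞)
  haveI : CompleteSpace (Set.Ici (0:ℝ)) := isClosed_Ici.completeSpace_coe
  haveI : Nonempty (Set.Ici (0:ℝ)) := ⟨⟨0, Set.self_mem_Ici⟩⟩
  set g : Set.Ici (0:ℝ) → Set.Ici (0:ℝ) := fun U => ⟨T U.1, hTnn U.1 U.2⟩ with hgdef
  set K : NNReal := ⟨k, hk0⟩ with hKdef
  have hcontr : ContractingWith K g := by
    constructor
    · exact_mod_cast hk1
    · refine LipschitzWith.of_dist_le_mul ?_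
      intro x y
      simp only [hgdef, Subtype.dist_eq, Real.dist_eq]
      exact hlip x.1 y.1 x.2 y.2
  obtain ⟨U0, hU0⟩ : ∃ U0 : Set.Ici (0:ℝ), Function.IsFixedPt g U0 :=
    ⟨hcontr.fixedPoint g, hcontr.fixedPoint_isFixedPt⟩
  refine ⟨U0.1, ⟨U0.2, ?_⟩, ?_⟩
  · exact congrArg Subtype.val hU0
  · rintro V ⟨hV0, hVfix⟩
    have hU0fix : T U0.1 = U0.1 := congrArg Subtype.val hU0
    have h := hlip V U0.1 hV0 U0.2
    rw [hVfix, hU0fix] at h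
    have habs : (1 - k) * |V - U0.1| ≤ 0 := by linarith
    have : |V - U0.1| ≤ 0 := by nlinarith [abs_nonneg (V - U0.1)]
    have : V - U0.1 = 0 := abs_eq_zero.mp (le_antisymm this (abs_nonneg _))
    linarith
end

section
/- Let λ > 0 and θ > 0. Then ( θ − ∫_0^θ (1 − e^{−λx}) dx ) / (1 − e^{−λθ}) = 1/λ, and ( 2·∫_0^θ λ x e^{−λx} dx + θ·e^{−λθ} ) / (1 − e^{−λθ}) = 2/λ − θ/(e^{λθ} − 1), which is strictly less than 2/λ. -/
open MeasureTheory Real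

lemma hasDerivAt_exp_neg_mul (lam x : ℝ) :
    HasDerivAt (fun x => exp (-(lam * x))) (-lam * exp (-(lam * x))) x := by
  simpa [mul_comm] using ((hasDerivAt_id x).const_mul lam).neg.exp

lemma integral_one_sub_exp_neg_mul {lam : ℝ} (hlam : lam ≠ 0) (θ : ℝ) :
    ∫ x in (0 : ℝ)..θ, (1 - exp (-(lam * x))) = θ - (1 - exp (-(lam * θ))) / lam := by
  have hderiv : ∀ x ∈ Set.uIcc 0 θ,
      HasDerivAt (fun x => x + exp (-(lam * x)) / lam) (1 - exp (-(lam * x))) x := by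
    intro x _
    refine ((hasDerivAt_id' x).add
      ((hasDerivAt_exp_neg_mul lam x).div_const lam)).congr_deriv ?_
    field_simp
    ring
  rw [intervalIntegral.integral_eq_sub_of_hasDerivAt hderiv
    (Continuous.intervalIntegrable (by fun_prop) _ _)]
  simp only [mul_zero, neg_zero, exp_zero]
  ring

lemma integral_mul_exp_neg_mul {lam : ℝ} (hlam : lam ≠ 0) (θ : ℝ) :
    ∫ x in (0 : ℝ)..θ, lam * x * exp (-(lam * x))
      = (1 - exp (-(lam * θ))) / lam - θ * exp (-(lam * θ)) := by
  have hderiv : ∀ x ∈ Set.uIcc 0 θ,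
      HasDerivAt (fun x => -(x * exp (-(lam * x))) - exp (-(lam * x)) / lam)
        (lam * x * exp (-(lam * x))) x := by
    intro x _
    refine (((hasDerivAt_id' x).mul (hasDerivAt_exp_neg_mul lam x)).neg.sub
      ((hasDerivAt_exp_neg_mul lam x).div_const lam)).congr_deriv ?_
    field_simp
    ring
  rw [intervalIntegral.integral_eq_sub_of_hasDerivAt hderiv
    (Continuous.intervalIntegrable (by fun_prop) _ _)]
  simp only [mul_zero, neg_zero, exp_zero, zero_mul]
  ring

/-- For the exponential service-time distribution with rate `lam > 0`
(CDF `F(x) = 1 - e^{-lam x}`, density `lam e^{-lam x}`) and any threshold `θ > 0`: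
`E[Y(s_θ)] = (θ - ∫_0^θ F(x) dx) / F(θ) = 1/lam`, and the average peak AoI of the
fixed-threshold policy is
`ζ(s_θ) = (2 ∫_0^θ lam x e^{-lam x} dx + θ e^{-lam θ}) / (1 - e^{-lam θ})
       = 2/lam - θ/(e^{lam θ} - 1) < 2/lam`. -/
theorem stmt_14 (lam : ℝ) (hlam : 0 < lam) (θ : ℝ) (hθ : 0 < θ) :
    (θ - ∫ x in Set.Icc 0 θ, (1 - exp (-(lam * x)))) / (1 - exp (-(lam * θ))) = 1 / lam
      ∧ ((2 * ∫ x in Set.Icc 0 θ, lam * x * exp (-(lam * x))) + θ * exp (-(lam * θ)))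
            / (1 - exp (-(lam * θ)))
          = 2 / lam - θ / (exp (lam * θ) - 1)
      ∧ 2 / lam - θ / (exp (lam * θ) - 1) < 2 / lam := by
  simp only [integral_Icc_eq_integral_Ioc, ← intervalIntegral.integral_of_le hθ.le,
    integral_one_sub_exp_neg_mul hlam.ne', integral_mul_exp_neg_mul hlam.ne']
  have hexp : 1 < exp (lam * θ) := one_lt_exp_iff.2 (by positivity)
  have hF : 1 - exp (-(lam * θ)) ≠ 0 := by
    rw [exp_neg]
    have := inv_lt_one_of_one_lt₀ hexp
    linarith
  have hE : exp (lam * θ) - 1 ≠ 0 := by linarith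
  refine ⟨?_, ?_, ?_⟩
  · rw [sub_sub_cancel, div_right_comm, div_self hF]
  · rw [exp_neg]
    field_simp
    ring
  · have : 0 < θ / (exp (lam * θ) - 1) := div_pos hθ (sub_pos.2 hexp)
    linarith
end

section
/- Let λ > 0. The function g(θ) = 2/λ − θ/(e^{λθ} − 1) is strictly increasing on (0,∞), and g(θ) → 1/λ as θ → 0⁺; consequently inf_{θ > 0} g(θ) = 1/λ, and the infimum is not attained. -/
/-!
Since `θ / (exp (λθ) - 1) = (λ · s(λθ))⁻¹` with `s = slope exp 0`, and the secant slopes of the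
strictly convex function `exp` through `0` increase strictly with the other endpoint and tend to
`exp' 0 = 1`, the function `g` increases strictly on `(0, ∞)` towards `2/λ - 1/λ = 1/λ` at `0⁺`.
A strictly increasing function on an open ray attains no lower bound of its values there.
-/

open Real Filter Set Topology

theorem StrictConvexOn.slope_strictMonoOn {𝕜 : Type*} [Field 𝕜] [LinearOrder 𝕜]
    [IsStrictOrderedRing 𝕜] {s : Set 𝕜} {f : 𝕜 → 𝕜} {x : 𝕜} (hf : StrictConvexOn 𝕜 s f)
    (hx : x ∈ s) : StrictMonoOn (slope f x) (s \ {x}) := by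
  rw [slope_fun_def_field]
  exact fun _ hy _ hz hyz ↦ hf.secant_strict_mono hx hy.1 hz.1 hy.2 hz.2 hyz

theorem StrictMonoOn.notMem_image_Ioi_of_mem_lowerBounds {α β : Type*} [LinearOrder α]
    [DenselyOrdered α] [Preorder β] {f : α → β} {a : α} {b : β} (hf : StrictMonoOn f (Ioi a))
    (hb : b ∈ lowerBounds (f '' Ioi a)) : b ∉ f '' Ioi a := by
  rintro ⟨x, hx, rfl⟩
  obtain ⟨y, hay, hyx⟩ := exists_between hx
  exact (hf hay hx hyx).not_ge (hb ⟨y, hay, rfl⟩)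

theorem slope_exp_zero_pos {x : ℝ} (hx : 0 < x) : 0 < slope exp 0 x := by
  rw [slope_def_field, exp_zero, sub_zero]
  exact div_pos (sub_pos.2 (one_lt_exp_iff.2 hx)) hx

theorem tendsto_slope_exp_zero_nhdsGT : Tendsto (slope exp 0) (𝓝[>] 0) (𝓝 1) := by
  simpa using (hasDerivAt_exp 0).tendsto_slope.mono_left (nhdsGT_le_nhdsNE 0)

theorem div_exp_mul_sub_one_eq_inv {c : ℝ} (hc : c ≠ 0) (θ : ℝ) :
    θ / (exp (c * θ) - 1) = (c * slope exp 0 (c * θ))⁻¹ := by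
  rw [slope_def_field, exp_zero, sub_zero, mul_div_assoc', mul_div_mul_left _ _ hc, inv_div]

theorem strictAntiOn_inv_mul_slope_exp {c : ℝ} (hc : 0 < c) :
    StrictAntiOn (fun θ ↦ (c * slope exp 0 (c * θ))⁻¹) (Ioi 0) := by
  intro x hx y hy hxy
  have hcx : 0 < c * x := mul_pos hc hx
  have hcy : 0 < c * y := mul_pos hc hy
  have hslope : slope exp 0 (c * x) < slope exp 0 (c * y) :=
    strictConvexOn_exp.slope_strictMonoOn (mem_univ 0) ⟨mem_univ _, hcx.ne'⟩
      ⟨mem_univ _, hcy.ne'⟩ (mul_lt_mul_of_pos_left hxy hc)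
  exact inv_strictAntiOn (mul_pos hc (slope_exp_zero_pos hcx))
    (mul_pos hc (slope_exp_zero_pos hcy)) (mul_lt_mul_of_pos_left hslope hc)

theorem tendsto_inv_mul_slope_exp {c : ℝ} (hc : 0 < c) :
    Tendsto (fun θ ↦ (c * slope exp 0 (c * θ))⁻¹) (𝓝[>] 0) (𝓝 c⁻¹) := by
  have hmul : Tendsto (c * ·) (𝓝[>] 0) (𝓝[>] 0) :=
    tendsto_nhdsWithin_iff.2 ⟨((continuous_const_mul c).tendsto' 0 0 (mul_zero c)).mono_left
      nhdsWithin_le_nhds, eventually_nhdsWithin_of_forall fun _ hx ↦ mul_pos hc hx⟩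
  simpa using ((tendsto_slope_exp_zero_nhdsGT.comp hmul).const_mul c).inv₀ (by simp [hc.ne'])

/-- For the exponential service-time distribution with rate `lam > 0`, the
average peak AoI of the fixed-threshold policy, `g(θ) = 2/lam - θ/(e^{lam θ} - 1)`, is strictly
increasing on `(0,∞)` and `g(θ) → 1/lam` as `θ → 0⁺`; consequently `inf_{θ>0} g(θ) = 1/lam`
and the infimum is not attained. -/
theorem stmt_15 (lam : ℝ) (hlam : 0 < lam)
    (g : ℝ → ℝ) (hg : ∀ θ : ℝ, g θ = 2 / lam - θ / (exp (lam * θ) - 1)) :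
    StrictMonoOn g (Set.Ioi 0)
      ∧ Tendsto g (nhdsWithin 0 (Set.Ioi 0)) (nhds (1 / lam))
      ∧ IsGLB (g '' Set.Ioi 0) (1 / lam)
      ∧ (1 / lam) ∉ g '' Set.Ioi 0 := by
  have hg' (θ : ℝ) : g θ = 2 / lam - (lam * slope exp 0 (lam * θ))⁻¹ := by
    rw [hg, div_exp_mul_sub_one_eq_inv hlam.ne']
  have hmono : StrictMonoOn g (Ioi 0) := fun x hx y hy hxy ↦ by
    simpa only [hg'] using
      sub_lt_sub_left (strictAntiOn_inv_mul_slope_exp hlam hx hy hxy) (2 / lam)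
  have hlim : Tendsto g (𝓝[>] 0) (𝓝 (1 / lam)) := by
    convert (tendsto_inv_mul_slope_exp hlam).const_sub (2 / lam) using 2
    · exact hg' _
    · ring
  have hglb : IsGLB (g '' Ioi 0) (1 / lam) :=
    isGLB_Ioi.isGLB_of_tendsto hmono.monotoneOn nonempty_Ioi hlim
  exact ⟨hmono, hlim, hglb, hmono.notMem_image_Ioi_of_mem_lowerBounds hglb.1⟩
end

section
/- Let x_m > 0 and 0 < α ≤ 1, and let μ be the Pareto measure on ℝ, i.e., the measure with Lebesgue density f(x) = α·x_m^α / x^{α+1} for x ≥ x_m and f(x) = 0 for x < x_m. Then μ is a probability measure; its mean is infinite, ∫ x dμ(x) = ∞ (as an integral in [0,∞]); for every θ > x_m one has F(θ) = μ((-∞,θ]) = 1 − (x_m/θ)^α > 0; and for every θ > x_m the quantity ζ(θ) = ( 2·∫_{[0,θ]} x dμ(x) + θ·μ((θ,∞)) ) / F(θ) is a finite real number. -/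
/-!
The measure is Mathlib's `paretoMeasure x_m α`. Integrating the density over `(θ, ∞)` gives the
tail `(x_m/θ)^α`, hence the CDF. The mean diverges because `x · f(x) = α x_m^α x^(-α)` with
`-α ≥ -1` is not integrable at infinity. The numerator of `ζ(θ)` is finite for any finite
measure, as `x ↦ x` is bounded on `[0, θ]`, and the denominator `F(θ)` is positive.
-/

open MeasureTheory
open Real Set ProbabilityTheory

lemma lintegral_Ioi_rpow_eq_top {c s : ℝ} (hc : 0 < c) (hs : -1 ≤ s) :
    ∫⁻ x in Ioi c, ENNReal.ofReal (x ^ s) = ⊤ := by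
  by_contra h
  have hnonneg : 0 ≤ᵐ[volume.restrict (Ioi c)] fun x : ℝ => x ^ s :=
    (ae_restrict_iff' measurableSet_Ioi).mpr (ae_of_all _ fun x (hx : c < x) =>
      rpow_nonneg (hc.trans hx).le s)
  have hint := (lintegral_ofReal_ne_top_iff_integrable
    (measurable_id.pow_const s).aestronglyMeasurable hnonneg).mp h
  linarith [(integrableOn_Ioi_rpow_iff hc).mp hint]

lemma setLIntegral_ofReal_Icc_ne_top {μ : Measure ℝ} [IsFiniteMeasureOnCompacts μ] (a b : ℝ) :
    ∫⁻ x in Icc a b, ENNReal.ofReal x ∂μ ≠ ⊤ :=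
  (setLIntegral_lt_top_of_isCompact isCompact_Icc.measure_ne_top isCompact_Icc
    continuous_real_toNNReal).ne

namespace ProbabilityTheory

variable {t r : ℝ}

lemma paretoPDF_eq_ofReal_div (ht : 0 < t) :
    paretoPDF t r = fun x => ENNReal.ofReal (if t ≤ x then r * t ^ r / x ^ (r + 1) else 0) := by
  funext x
  rw [paretoPDF_eq]
  split_ifs with hx
  · rw [rpow_neg (ht.trans_le hx).le, div_eq_mul_inv]
  · rfl

lemma paretoMeasure_Ioi (ht : 0 < t) (hr : 0 < r) {θ : ℝ} (hθ : t ≤ θ) :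
    paretoMeasure t r (Ioi θ) = ENNReal.ofReal ((t / θ) ^ r) := by
  have hθ0 : 0 < θ := ht.trans_le hθ
  have hint : IntegrableOn (fun x => r * t ^ r * x ^ (-(r + 1))) (Ioi θ) :=
    (integrableOn_Ioi_rpow_of_lt (by linarith) hθ0).const_mul _
  have hnonneg : 0 ≤ᵐ[volume.restrict (Ioi θ)] fun x => r * t ^ r * x ^ (-(r + 1)) :=
    (ae_restrict_iff' measurableSet_Ioi).mpr (ae_of_all _ fun x (hx : θ < x) => by
      have := hθ0.trans hx; positivity)
  rw [paretoMeasure, withDensity_apply _ measurableSet_Ioi,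
    setLIntegral_congr_fun measurableSet_Ioi fun x (hx : θ < x) => paretoPDF_of_le (hθ.trans hx.le),
    ← ofReal_integral_eq_lintegral_ofReal hint hnonneg, integral_const_mul,
    integral_Ioi_rpow_of_lt (by linarith) hθ0, show -(r + 1) + 1 = -r by ring,
    div_rpow ht.le hθ0.le, rpow_neg hθ0.le]
  congr 1
  field_simp

lemma paretoMeasure_Iic (ht : 0 < t) (hr : 0 < r) {θ : ℝ} (hθ : t ≤ θ) :
    paretoMeasure t r (Iic θ) = ENNReal.ofReal (1 - (t / θ) ^ r) := by
  have := isProbabilityMeasure_paretoMeasure ht hr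
  rw [← compl_Ioi, prob_compl_eq_one_sub measurableSet_Ioi, paretoMeasure_Ioi ht hr hθ,
    ENNReal.ofReal_sub _ (by positivity [ht.trans_le hθ]), ENNReal.ofReal_one]

lemma lintegral_ofReal_paretoMeasure_eq_top (ht : 0 < t) (hr : 0 < r) (hr1 : r ≤ 1) :
    ∫⁻ x, ENNReal.ofReal x ∂paretoMeasure t r = ⊤ := by
  have hpdf : ∀ x ∈ Ioi t, paretoPDF t r x * ENNReal.ofReal x
      = ENNReal.ofReal (r * t ^ r) * ENNReal.ofReal (x ^ (-r)) := fun x (hx : t < x) => by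
    have hx0 : 0 < x := ht.trans hx
    rw [paretoPDF_of_le hx.le, ← ENNReal.ofReal_mul (by positivity),
      ← ENNReal.ofReal_mul (by positivity), rpow_neg hx0.le, rpow_neg hx0.le, rpow_add hx0,
      rpow_one]
    congr 1
    field_simp
  refine top_unique ?_
  calc ⊤ = ∫⁻ x in Ioi t, ENNReal.ofReal (r * t ^ r) * ENNReal.ofReal (x ^ (-r)) := by
        rw [lintegral_const_mul _ (by fun_prop), lintegral_Ioi_rpow_eq_top ht (by linarith),
          ENNReal.mul_top (by simp; positivity)]
    _ = ∫⁻ x in Ioi t, paretoPDF t r x * ENNReal.ofReal x :=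
        (setLIntegral_congr_fun measurableSet_Ioi hpdf).symm
    _ ≤ ∫⁻ x, paretoPDF t r x * ENNReal.ofReal x := setLIntegral_le_lintegral _ _
    _ = ∫⁻ x, ENNReal.ofReal x ∂paretoMeasure t r :=
        (lintegral_withDensity_eq_lintegral_mul _
          (measurable_paretoPDFReal t r).ennreal_ofReal (by fun_prop)).symm

end ProbabilityTheory

lemma peakAoI_ne_top {μ : Measure ℝ} [IsFiniteMeasure μ] {θ : ℝ} (hθ : μ (Iic θ) ≠ 0) :
    (2 * ∫⁻ x in Icc 0 θ, ENNReal.ofReal x ∂μ + ENNReal.ofReal θ * μ (Ioi θ)) / μ (Iic θ) ≠ ⊤ :=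
  ENNReal.div_ne_top (ENNReal.add_ne_top.mpr
    ⟨ENNReal.mul_ne_top (by norm_num) (setLIntegral_ofReal_Icc_ne_top 0 θ),
      ENNReal.mul_ne_top ENNReal.ofReal_ne_top (measure_ne_top μ _)⟩) hθ

/-- Let `μ` be the Pareto measure with scale `x_m > 0` and tail index
`0 < α ≤ 1`, i.e. the measure with Lebesgue density `α x_m^α / x^(α+1)` on `[x_m, ∞)` and `0`
below `x_m`. Then `μ` is a probability measure; its mean is infinite
(`∫ x dμ = ∞` in `[0,∞]`); for every `θ > x_m`, `F(θ) = μ((-∞,θ]) = 1 - (x_m/θ)^α > 0`; and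
for every `θ > x_m` the average peak AoI
`ζ(θ) = (2 ∫_{[0,θ]} x dμ + θ μ((θ,∞))) / μ((-∞,θ])` of the fixed-threshold policy is a finite
quantity (the `[0,∞]`-valued expression is not `∞`). -/
theorem stmt_16 (x_m α : ℝ) (hx : 0 < x_m) (hα0 : 0 < α) (hα1 : α ≤ 1)
    (μ : Measure ℝ)
    (hμ : μ = volume.withDensity
        (fun x : ℝ => ENNReal.ofReal (if x_m ≤ x then α * x_m ^ α / x ^ (α + 1) else 0))) :
    IsProbabilityMeasure μ
      ∧ (∫⁻ x : ℝ, ENNReal.ofReal x ∂μ) = ⊤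
      ∧ (∀ θ : ℝ, x_m < θ →
          (μ (Set.Iic θ)).toReal = 1 - (x_m / θ) ^ α ∧ 0 < (μ (Set.Iic θ)).toReal)
      ∧ (∀ θ : ℝ, x_m < θ →
          (2 * ∫⁻ x in Set.Icc 0 θ, ENNReal.ofReal x ∂μ
              + ENNReal.ofReal θ * μ (Set.Ioi θ)) / μ (Set.Iic θ) ≠ ⊤) := by
  rw [← paretoPDF_eq_ofReal_div hx] at hμ
  change μ = paretoMeasure x_m α at hμ
  subst hμ
  have hprob := isProbabilityMeasure_paretoMeasure hx hα0
  have hcdf_pos : ∀ θ, x_m < θ → 0 < 1 - (x_m / θ) ^ α := fun θ hθ => by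
    have hθ0 : 0 < θ := hx.trans hθ
    linarith [rpow_lt_one (by positivity) ((div_lt_one hθ0).mpr hθ) hα0]
  refine ⟨hprob, lintegral_ofReal_paretoMeasure_eq_top hx hα0 hα1, fun θ hθ => ?_,
    fun θ hθ => peakAoI_ne_top ?_⟩
  · rw [paretoMeasure_Iic hx hα0 hθ.le, ENNReal.toReal_ofReal (hcdf_pos θ hθ).le]
    exact ⟨rfl, hcdf_pos θ hθ⟩
  · rw [paretoMeasure_Iic hx hα0 hθ.le]
    exact ENNReal.ofReal_pos.mpr (hcdf_pos θ hθ) |>.ne'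
end
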